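/- Let D ⊆ H be a nonempty open connected set, let f : D → ℂ be polar-analytic on D, and suppose (r₀,θ₀) ∈ D is an accumulation point of distinct zeros of f, i.e. there exists a sequence (r_n,θ_n) ∈ D of zeros of f with (r_n,θ_n) ≠ (r₀,θ₀) for all n and (r_n,θ_n) → (r₀,θ₀). Then (Θ₀^k f)(r₀,θ₀) = 0 for every integer k ≥ 0. -/

import Mathlib

open MeasureTheory Filter Complex ENNReal

noncomputable section

/-- The right half-plane `H = {(r,θ) : r > 0}`. -/
def polarHalfPlane : Set (ℝ × ℝ) := {p : ℝ × ℝ | 0 < p.1}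

/-- `f` has polar derivative `L` at `p`, the limit being taken within `D`. -/
def HasPolarDerivAt (f : ℝ × ℝ → ℂ) (D : Set (ℝ × ℝ)) (p : ℝ × ℝ) (L : ℂ) : Prop :=
  Tendsto (fun q : ℝ × ℝ =>
      (f q - f p) /
        ((q.1 : ℂ) * Complex.exp (Complex.I * (q.2 : ℂ)) -
         (p.1 : ℂ) * Complex.exp (Complex.I * (p.2 : ℂ))))
    (nhdsWithin p (D \ {p})) (nhds L)

/-- `f` is polar-analytic on `D`. -/
def PolarAnalyticOn (f : ℝ × ℝ → ℂ) (D : Set (ℝ × ℝ)) : Prop :=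
  ∀ p ∈ D, ∃ L : ℂ, HasPolarDerivAt f D p L

/-- The polar Mellin derivative `Θ_c f = r ∂f/∂r + c f`. -/
def mellinPolarDeriv (c : ℝ) (f : ℝ × ℝ → ℂ) : ℝ × ℝ → ℂ :=
  fun p => (p.1 : ℂ) * deriv (fun r : ℝ => f (r, p.2)) p.1 + (c : ℂ) * f p

/-- The `X_c^p` norm. -/
def XNorm (c : ℝ) (p : ℝ≥0∞) (φ : ℝ → ℂ) : ℝ≥0∞ :=
  if p = ⊤ then ⨆ r : {r : ℝ // 0 < r}, ENNReal.ofReal ((r : ℝ) ^ c * ‖φ r‖)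
  else (∫⁻ r in Set.Ioi (0 : ℝ),
          ENNReal.ofReal ((r ^ c * ‖φ r‖) ^ p.toReal / r)) ^ (1 / p.toReal)

/-- Membership in the Mellin–Bernstein space `B^p_{c,T}`. -/
def MemMellinBernstein (p : ℝ≥0∞) (c T : ℝ) (f : ℝ × ℝ → ℂ) : Prop :=
  PolarAnalyticOn f polarHalfPlane ∧
  XNorm c p (fun r => f (r, 0)) < ⊤ ∧
  ∃ C : ℝ, 0 < C ∧ ∀ r θ : ℝ, 0 < r → r ^ c * ‖f (r, θ)‖ ≤ C * Real.exp (T * |θ|)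

/-- The polar disk `E((r₀,θ₀),ρ)`. -/
def polarDisk (p : ℝ × ℝ) (ρ : ℝ) : Set (ℝ × ℝ) :=
  {q : ℝ × ℝ | 0 < q.1 ∧
    ‖((Real.log (q.1 / p.1) : ℂ) + Complex.I * ((q.2 - p.2 : ℝ) : ℂ))‖ < ρ}

/-- The polar contour integral along the positively oriented boundary of
`[a,b] × [α,β]`:  `∮ g(r,θ) e^{iθ} (dr + i r dθ)`. -/
def rectPolarIntegral (a b α β : ℝ) (g : ℝ × ℝ → ℂ) : ℂ :=
  (∫ r in a..b, g (r, α) * Complex.exp (Complex.I * (α : ℂ))) +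
  (∫ θ in α..β, g (b, θ) * Complex.I * (b : ℂ) * Complex.exp (Complex.I * (θ : ℂ))) -
  (∫ r in a..b, g (r, β) * Complex.exp (Complex.I * (β : ℂ))) -
  (∫ θ in α..β, g (a, θ) * Complex.I * (a : ℂ) * Complex.exp (Complex.I * (θ : ℂ)))

/-- `(r₀,θ₀)` is a logarithmic pole of order `k` of `f`, witnessed by the
neighborhood `U₀` and the polar-analytic function `g`. -/
def IsLogPole (f : ℝ × ℝ → ℂ) (p : ℝ × ℝ) (k : ℕ) (U₀ : Set (ℝ × ℝ))
    (g : ℝ × ℝ → ℂ) : Prop :=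
  IsOpen U₀ ∧ p ∈ U₀ ∧ U₀ ⊆ polarHalfPlane ∧ 1 ≤ k ∧
  PolarAnalyticOn f (U₀ \ {p}) ∧ PolarAnalyticOn g U₀ ∧ g p ≠ 0 ∧
  ∀ q ∈ U₀ \ {p},
    f q = g q / ((Real.log (q.1 / p.1) : ℂ) + Complex.I * ((q.2 - p.2 : ℝ) : ℂ)) ^ k

/-- The `c`-residue of a logarithmic pole of order `k` with witness `g`. -/
def cResidue (c : ℝ) (p : ℝ × ℝ) (k : ℕ) (g : ℝ × ℝ → ℂ) : ℂ :=
  ((p.1 ^ c : ℝ) : ℂ) * Complex.exp (Complex.I * (c : ℂ) * (p.2 : ℂ)) *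
    ((mellinPolarDeriv c)^[k - 1] g p) / ((k - 1).factorial : ℂ)

/-- The central Mellin difference `δ_{c,t} f`. -/
def centralMellinDiff (c t : ℝ) (f : ℝ × ℝ → ℂ) : ℝ × ℝ → ℂ :=
  fun q => ((t ^ c : ℝ) : ℂ) * f (t * q.1, q.2) - ((t ^ (-c) : ℝ) : ℂ) * f (t⁻¹ * q.1, q.2)

/-!
Through a branch of polar coordinates, `f` becomes a function of `w = r e^{iθ}`, and
polar-analyticity says exactly that this function is complex differentiable; so it is
holomorphic near `r₀ e^{iθ₀}`. By the identity theorem the accumulating zeros make it, hence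
`f`, vanish on a neighbourhood of `(r₀, θ₀)`, and `Θ₀ = r ∂/∂r` only sees `f` on such a
neighbourhood.
-/

open Topology

def polarExp (q : ℝ × ℝ) : ℂ := (q.1 : ℂ) * Complex.exp (Complex.I * (q.2 : ℂ))

theorem continuous_polarExp : Continuous polarExp := by
  unfold polarExp
  fun_prop

/-- Polar coordinates with the angle in `(θ₀ - π, θ₀ + π)`: a local inverse of `polarExp`
around every point `(r, θ₀)`. -/
def polarChart (θ₀ : ℝ) : OpenPartialHomeomorph ℂ (ℝ × ℝ) :=
  ((Homeomorph.mulLeft₀ (Complex.exp (-(Complex.I * θ₀))) (Complex.exp_ne_zero _)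
    ).toOpenPartialHomeomorph.trans Complex.polarCoord).trans
    (Homeomorph.addLeft ((0 : ℝ), θ₀)).toOpenPartialHomeomorph

section PolarChart

variable {θ₀ : ℝ}

theorem polarChart_symm_apply (q : ℝ × ℝ) : (polarChart θ₀).symm q = polarExp q := by
  simp only [polarChart, OpenPartialHomeomorph.coe_trans_symm,
    Homeomorph.toOpenPartialHomeomorph_symm_apply, Homeomorph.mulLeft₀_symm_apply,
    Homeomorph.addLeft_symm, Prod.neg_mk, neg_zero, Homeomorph.coe_addLeft, Function.comp_apply,
    Complex.polarCoord_symm_apply, Prod.fst_add, zero_add, Prod.snd_add, ofReal_cos,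
    Complex.ofReal_add, ofReal_neg, ofReal_sin, polarExp]
  rw [← Complex.exp_mul_I, Complex.exp_neg, inv_inv, mul_left_comm, ← Complex.exp_add]
  ring_nf

theorem mk_mem_polarChart_target {r : ℝ} (hr : 0 < r) : (r, θ₀) ∈ (polarChart θ₀).target := by
  simp [polarChart, Complex.polarCoord_target, Homeomorph.addLeft_symm, hr, Real.pi_pos]

theorem polarExp_mem_polarChart_source {q : ℝ × ℝ} (hq : q ∈ (polarChart θ₀).target) :
    polarExp q ∈ (polarChart θ₀).source := by
  rw [← polarChart_symm_apply]
  exact (polarChart θ₀).map_target hq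

theorem polarExp_polarChart {w : ℂ} (hw : w ∈ (polarChart θ₀).source) :
    polarExp (polarChart θ₀ w) = w := by
  rw [← polarChart_symm_apply, (polarChart θ₀).left_inv hw]

theorem polarChart_polarExp {q : ℝ × ℝ} (hq : q ∈ (polarChart θ₀).target) :
    polarChart θ₀ (polarExp q) = q := by
  rw [← polarChart_symm_apply, (polarChart θ₀).right_inv hq]

variable {f : ℝ × ℝ → ℂ} {D : Set (ℝ × ℝ)} {p : ℝ × ℝ}

theorem HasPolarDerivAt.hasDerivAt_comp_polarChart {L : ℂ} (hf : HasPolarDerivAt f D p L)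
    (hD : D ∈ 𝓝 p) (hp : p ∈ (polarChart θ₀).target) :
    HasDerivAt (f ∘ polarChart θ₀) L (polarExp p) := by
  have hw : polarExp p ∈ (polarChart θ₀).source := polarExp_mem_polarChart_source hp
  have hsource : ∀ᶠ u in 𝓝[≠] polarExp p, u ∈ (polarChart θ₀).source :=
    eventually_nhdsWithin_of_eventually_nhds ((polarChart θ₀).open_source.eventually_mem hw)
  have hchart : Tendsto (polarChart θ₀) (𝓝[≠] polarExp p) (𝓝[D \ {p}] p) := by
    have hcont : Tendsto (polarChart θ₀) (𝓝 (polarExp p)) (𝓝 p) := by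
      simpa only [ContinuousAt, polarChart_polarExp hp] using (polarChart θ₀).continuousAt hw
    refine tendsto_nhdsWithin_iff.2 ⟨hcont.mono_left nhdsWithin_le_nhds, ?_⟩
    filter_upwards [eventually_nhdsWithin_of_eventually_nhds (hcont.eventually_mem hD),
      hsource, self_mem_nhdsWithin] with u huD hu hne
    exact ⟨huD, fun hup => hne ((polarExp_polarChart hu).symm.trans (congrArg polarExp hup))⟩
  rw [hasDerivAt_iff_tendsto_slope]
  refine (hf.comp hchart).congr' ?_
  filter_upwards [hsource] with u hu
  simp only [Function.comp_apply, slope_def_field, polarChart_polarExp hp]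
  change _ / (polarExp (polarChart θ₀ u) - polarExp p) = _
  rw [polarExp_polarChart hu]

theorem PolarAnalyticOn.analyticAt_comp_polarChart (hf : PolarAnalyticOn f D) (hD : IsOpen D)
    (hp : p ∈ D) (hpt : p ∈ (polarChart θ₀).target) :
    AnalyticAt ℂ (f ∘ polarChart θ₀) (polarExp p) := by
  have hw : polarExp p ∈ (polarChart θ₀).source := polarExp_mem_polarChart_source hpt
  have hnhds : D ∩ (polarChart θ₀).target ∈ 𝓝 (polarChart θ₀ (polarExp p)) := by
    rw [polarChart_polarExp hpt]
    exact (hD.inter (polarChart θ₀).open_target).mem_nhds ⟨hp, hpt⟩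
  rw [analyticAt_iff_eventually_differentiableAt]
  filter_upwards [(polarChart θ₀).continuousAt hw hnhds,
    (polarChart θ₀).open_source.mem_nhds hw] with u ⟨huD, hut⟩ hu
  obtain ⟨L, hL⟩ := hf _ huD
  simpa only [polarExp_polarChart hu] using
    (hL.hasDerivAt_comp_polarChart (hD.mem_nhds huD) hut).differentiableAt

end PolarChart

theorem PolarAnalyticOn.eventuallyEq_zero_of_frequently_eq_zero {f : ℝ × ℝ → ℂ}
    {D : Set (ℝ × ℝ)} {p : ℝ × ℝ} (hf : PolarAnalyticOn f D) (hD : IsOpen D) (hp : p ∈ D)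
    (hp₁ : 0 < p.1) (hfreq : ∃ᶠ q in 𝓝[≠] p, f q = 0) : f =ᶠ[𝓝 p] 0 := by
  have hpt : p ∈ (polarChart p.2).target := mk_mem_polarChart_target hp₁
  have htarget : ∀ᶠ q in 𝓝 p, q ∈ (polarChart p.2).target :=
    (polarChart p.2).open_target.mem_nhds hpt
  have hexp : Tendsto polarExp (𝓝[≠] p) (𝓝[≠] polarExp p) := by
    refine tendsto_nhdsWithin_iff.2
      ⟨continuous_polarExp.continuousAt.mono_left nhdsWithin_le_nhds, ?_⟩
    filter_upwards [eventually_nhdsWithin_of_eventually_nhds htarget,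
      self_mem_nhdsWithin] with q hq hne heq
    have hqp := congrArg (polarChart p.2) heq
    rw [polarChart_polarExp hq, polarChart_polarExp hpt] at hqp
    exact hne hqp
  have hfreq' : ∃ᶠ u in 𝓝[≠] polarExp p, (f ∘ polarChart p.2) u = 0 := by
    refine hexp.frequently (hfreq.mp ?_)
    filter_upwards [eventually_nhdsWithin_of_eventually_nhds htarget] with q hq hfq
    simpa only [Function.comp_apply, polarChart_polarExp hq] using hfq
  have hzero :=
    (hf.analyticAt_comp_polarChart hD hp hpt).frequently_zero_iff_eventually_zero.1 hfreq'
  filter_upwards [htarget, continuous_polarExp.continuousAt hzero] with q hq hq0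
  simpa only [Set.mem_preimage, Set.mem_ofPred_eq, Function.comp_apply, polarChart_polarExp hq,
    Pi.zero_apply] using hq0

theorem Filter.EventuallyEq.mellinPolarDeriv {f g : ℝ × ℝ → ℂ} {p : ℝ × ℝ}
    (h : f =ᶠ[𝓝 p] g) (c : ℝ) :
    _root_.mellinPolarDeriv c f =ᶠ[𝓝 p] _root_.mellinPolarDeriv c g := by
  filter_upwards [h.eventually_nhds] with q hq
  have hslice : (fun r : ℝ => f (r, q.2)) =ᶠ[𝓝 q.1] fun r => g (r, q.2) :=
    ((Continuous.prodMk_left q.2).tendsto q.1).eventually hq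
  simp only [_root_.mellinPolarDeriv, hslice.deriv_eq, hq.self_of_nhds]

theorem Filter.EventuallyEq.iterate_mellinPolarDeriv {f g : ℝ × ℝ → ℂ} {p : ℝ × ℝ}
    (h : f =ᶠ[𝓝 p] g) (c : ℝ) (k : ℕ) :
    (_root_.mellinPolarDeriv c)^[k] f =ᶠ[𝓝 p] (_root_.mellinPolarDeriv c)^[k] g := by
  induction k with
  | zero => exact h
  | succ k ih => simpa only [Function.iterate_succ_apply'] using ih.mellinPolarDeriv c

theorem mellinPolarDeriv_zero (c : ℝ) : mellinPolarDeriv c 0 = 0 := by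
  ext p
  simp [mellinPolarDeriv]

theorem statement2_general (D : Set (ℝ × ℝ)) (hD : IsOpen D) (hDH : D ⊆ polarHalfPlane)
    (f : ℝ × ℝ → ℂ) (hf : PolarAnalyticOn f D)
    (p₀ : ℝ × ℝ) (hp₀ : p₀ ∈ D) (z : ℕ → ℝ × ℝ)
    (hzero : ∀ n, f (z n) = 0) (hne : ∀ n, z n ≠ p₀)
    (hlim : Tendsto z atTop (nhds p₀)) :
    ∀ k : ℕ, (mellinPolarDeriv 0)^[k] f p₀ = 0 := by
  intro k
  have hfreq : ∃ᶠ q in 𝓝[≠] p₀, f q = 0 :=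
    (tendsto_nhdsWithin_iff.2 ⟨hlim, .of_forall hne⟩).frequently (.of_forall hzero)
  have hf₀ : f =ᶠ[𝓝 p₀] 0 := hf.eventuallyEq_zero_of_frequently_eq_zero hD hp₀ (hDH hp₀) hfreq
  simpa only [Function.iterate_fixed (mellinPolarDeriv_zero 0), Pi.zero_apply] using
    (hf₀.iterate_mellinPolarDeriv 0 k).eq_of_nhds

/-- at an accumulation point of distinct zeros of a polar-analytic
function, all polar Mellin derivatives `Θ₀^k f` vanish. -/
theorem statement2 (D : Set (ℝ × ℝ)) (hD : IsOpen D) (hDH : D ⊆ polarHalfPlane)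
    (hconn : IsConnected D) (f : ℝ × ℝ → ℂ) (hf : PolarAnalyticOn f D)
    (p₀ : ℝ × ℝ) (hp₀ : p₀ ∈ D) (z : ℕ → ℝ × ℝ) (hzD : ∀ n, z n ∈ D)
    (hzero : ∀ n, f (z n) = 0) (hne : ∀ n, z n ≠ p₀)
    (hlim : Tendsto z atTop (nhds p₀)) :
    ∀ k : ℕ, (mellinPolarDeriv 0)^[k] f p₀ = 0 :=
  statement2_general D hD hDH f hf p₀ hp₀ z hzero hne hlim

end
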